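/- Let k be a field and R = RCFM(k), A the shift matrix. Then the quotient k-vector space R / (R(I−A)) is isomorphic to (∏_{i∈ℕ} k) / (⊕_{i∈ℕ} k), via the map sending the class of a matrix R' to the class of the sequence of its row sums (∑_j r'_{ij})_{i∈ℕ}. -/

import Mathlib

/-- A matrix is row-column finite if every row and every column has finitely many
nonzero entries. -/
def RCF {k : Type*} [Field k] (M : ℕ → ℕ → k) : Prop :=
  (∀ i, {j | M i j ≠ 0}.Finite) ∧ (∀ j, {i | M i j ≠ 0}.Finite)

/-- `RCFM(k)` as a submodule of the space of all `ℕ×ℕ` matrices over `k`. -/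
def RCFMmod (k : Type*) [Field k] : Submodule k (ℕ → ℕ → k) where
  carrier := {M | RCF M}
  zero_mem' := by constructor <;> intro i <;> simp
  add_mem' := by
    rintro M N ⟨hM1, hM2⟩ ⟨hN1, hN2⟩
    constructor
    · intro i
      refine ((hM1 i).union (hN1 i)).subset fun j hj => ?_
      by_contra hc
      simp only [Set.mem_union, Set.mem_setOf_eq, not_or, not_not] at hc
      exact hj (by simp [hc.1, hc.2])
    · intro j
      refine ((hM2 j).union (hN2 j)).subset fun i hi => ?_
      by_contra hc
      simp only [Set.mem_union, Set.mem_setOf_eq, not_or, not_not] at hc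
      exact hi (by simp [hc.1, hc.2])
  smul_mem' := by
    rintro c M ⟨hM1, hM2⟩
    constructor
    · intro i
      refine (hM1 i).subset fun j hj => ?_
      by_contra hc
      simp only [Set.mem_setOf_eq, not_not] at hc
      exact hj (by simp [hc])
    · intro j
      refine (hM2 j).subset fun i hi => ?_
      by_contra hc
      simp only [Set.mem_setOf_eq, not_not] at hc
      exact hi (by simp [hc])

/-- The shift matrix `A` over `k`: `a_{i+1,i} = 1` and all other entries `0`. -/
def shiftA (k : Type*) [Field k] : ℕ → ℕ → k := fun i j => if i = j + 1 then 1 else 0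

/-- The identity `ℕ×ℕ` matrix over `k`. -/
def idMat (k : Type*) [Field k] : ℕ → ℕ → k := fun i j => if i = j then 1 else 0

/-- Product of `ℕ×ℕ` matrices, defined entrywise by the (finite) sums. -/
noncomputable def matMul {k : Type*} [Field k] (M N : ℕ → ℕ → k) : ℕ → ℕ → k :=
  fun i j => ∑ᶠ l, M i l * N l j

/-- The subspace `R(I−A) = {X(I−A) : X ∈ RCFM(k)}` of `RCFM(k)`. -/
def rightMulIdeal (k : Type*) [Field k] : Submodule k (RCFMmod k) :=
  Submodule.span k
    {P : RCFMmod k | ∃ X, RCF X ∧ (P : ℕ → ℕ → k) = matMul X (idMat k - shiftA k)}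

/-- The subspace of finitely supported sequences inside the space of all sequences. -/
def finSupportedSeq (k : Type*) [Field k] : Submodule k (ℕ → k) where
  carrier := {s | (Function.support s).Finite}
  zero_mem' := by simp [Function.support]
  add_mem' := by
    intro s t hs ht
    exact (hs.union ht).subset (Function.support_add s t)
  smul_mem' := by
    intro c s hs
    exact hs.subset (Function.support_const_smul_subset c s)


/-!
Right multiplication by `I − A` replaces the rows of `X` by their successive differences, so the
row sums of `X(I − A)` telescope to the first column of `X`, which is finitely supported. Conversely,
if the row sums `s` of `P` are finitely supported, the tail sums `X i j = s i − ∑_{l<j} P i l` form a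
row-column-finite matrix with `X(I − A) = P`. Hence the kernel of "row sums modulo finitely supported
sequences" is exactly `R(I − A)`, and this map is onto because diagonal matrices are row-column finite.
-/

open Function Finset

theorem exists_support_subset_range {M : Type*} [Zero M] {f : ℕ → M} (hf : (support f).Finite) :
    ∃ n, support f ⊆ range n := by
  obtain ⟨n, hn⟩ := hf.toFinset.exists_nat_subset_range
  exact ⟨n, Set.Finite.toFinset_subset.mp hn⟩

theorem finsum_sub_succ {G : Type*} [AddCommGroup G] {f : ℕ → G} (hf : (support f).Finite) :
    ∑ᶠ j, (f j - f (j + 1)) = f 0 := by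
  obtain ⟨n, hn⟩ := exists_support_subset_range hf
  have hzero : ∀ j, n ≤ j → f j = 0 := fun j hj =>
    support_subset_iff'.mp hn j (by simpa using hj)
  have hsupp : support (fun j => f j - f (j + 1)) ⊆ range n :=
    support_subset_iff'.mpr fun j hj => by
      simp only [coe_range, Set.mem_Iio, not_lt] at hj
      rw [hzero j hj, hzero (j + 1) (by omega), sub_zero]
  rw [finsum_eq_sum_of_support_subset _ hsupp, sum_range_sub', hzero n le_rfl, sub_zero]

section

variable {k : Type*} [Field k]

theorem matMul_idMat_sub_shiftA_apply (X : ℕ → ℕ → k) (i j : ℕ) :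
    matMul X (idMat k - shiftA k) i j = X i j - X i (j + 1) := by
  have hsupp : support (fun l => X i l * (idMat k - shiftA k) l j) ⊆ ({j, j + 1} : Finset ℕ) :=
    support_subset_iff'.mpr fun l hl => by
      simp only [coe_insert, coe_singleton, Set.mem_insert_iff, Set.mem_singleton_iff,
        not_or] at hl
      simp [idMat, shiftA, hl.1, hl.2]
  rw [matMul, finsum_eq_sum_of_support_subset _ hsupp, sum_pair (by omega)]
  simp [idMat, shiftA, sub_eq_add_neg]

theorem RCF.finsum_matMul_idMat_sub_shiftA {X : ℕ → ℕ → k} (hX : RCF X) (i : ℕ) :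
    ∑ᶠ j, matMul X (idMat k - shiftA k) i j = X i 0 := by
  simp only [matMul_idMat_sub_shiftA_apply]
  exact finsum_sub_succ (hX.1 i)

theorem RCF.exists_eq_matMul_idMat_sub_shiftA {P : ℕ → ℕ → k} (hP : RCF P)
    (hs : (support fun i => ∑ᶠ j, P i j).Finite) :
    ∃ X, RCF X ∧ P = matMul X (idMat k - shiftA k) := by
  refine ⟨fun i j => ∑ᶠ l, P i l - ∑ l ∈ range j, P i l, ⟨fun i => ?_, fun j => ?_⟩, ?_⟩
  · obtain ⟨n, hn⟩ := exists_support_subset_range (hP.1 i)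
    refine (Set.finite_Iio n).subset fun j hj => ?_
    by_contra hjn
    simp only [Set.mem_Iio, not_lt] at hjn
    refine hj (sub_eq_zero.mpr (finsum_eq_sum_of_support_subset _ (hn.trans ?_)))
    simpa using hjn
  · refine (hs.union ((finite_toSet (range j)).biUnion fun l _ => hP.2 l)).subset fun i hi => ?_
    by_contra hout
    simp only [Set.mem_union, mem_support, Set.mem_iUnion, Set.mem_ofPred_eq, mem_coe, not_or,
      not_exists, not_not] at hout
    exact hi (by dsimp only; rw [hout.1, sum_eq_zero fun l hl => hout.2 l hl, sub_zero])
  · ext i j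
    rw [matMul_idMat_sub_shiftA_apply, sum_range_succ]
    abel

variable (k)

noncomputable def rowSum : RCFMmod k →ₗ[k] (ℕ → k) where
  toFun P i := ∑ᶠ j, (P : ℕ → ℕ → k) i j
  map_add' P Q := funext fun i => finsum_add_distrib (P.2.1 i) (Q.2.1 i)
  map_smul' c _ := funext fun _ => (mul_finsum _ c).symm

theorem rowSum_surjective : Surjective (rowSum k) := by
  intro t
  have hdiag : RCF fun i j => if i = j then t i else 0 :=
    ⟨fun i => (Set.finite_singleton i).subset fun j hj => by
        by_contra hij
        exact hj (if_neg (Ne.symm hij)),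
      fun j => (Set.finite_singleton j).subset fun i hi => by
        by_contra hij
        exact hi (if_neg hij)⟩
  refine ⟨⟨_, hdiag⟩, funext fun i => ?_⟩
  exact (finsum_eq_single _ i fun j hj => if_neg (Ne.symm hj)).trans (if_pos rfl)

theorem ker_mkQ_comp_rowSum :
    LinearMap.ker ((finSupportedSeq k).mkQ ∘ₗ rowSum k) = rightMulIdeal k := by
  rw [LinearMap.ker_comp, Submodule.ker_mkQ]
  apply le_antisymm
  · intro P hP
    obtain ⟨X, hX, hPX⟩ := RCF.exists_eq_matMul_idMat_sub_shiftA P.2 hP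
    exact Submodule.subset_span ⟨X, hX, hPX⟩
  · rw [rightMulIdeal, Submodule.span_le]
    rintro P ⟨X, hX, hPX⟩
    change (support fun i => ∑ᶠ j, (P : ℕ → ℕ → k) i j).Finite
    simp only [hPX, hX.finsum_matMul_idMat_sub_shiftA]
    exact hX.2 0

end

/-- `RCFM(k)/(R(I−A)) ≅ (∏_{i∈ℕ} k)/(⊕_{i∈ℕ} k)` via the map sending the class of a matrix
to the class of the sequence of its row sums. -/
theorem quotient_rowsum_iso (k : Type*) [Field k] :
    ∃ e : ((RCFMmod k) ⧸ rightMulIdeal k) ≃ₗ[k] ((ℕ → k) ⧸ finSupportedSeq k),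
      ∀ P : RCFMmod k,
        e (Submodule.Quotient.mk P) =
          Submodule.Quotient.mk (fun i => ∑ᶠ j, (P : ℕ → ℕ → k) i j) := by
  have hsurj : Surjective ((finSupportedSeq k).mkQ ∘ₗ rowSum k) :=
    (finSupportedSeq k).mkQ_surjective.comp (rowSum_surjective k)
  exact ⟨(Submodule.quotEquivOfEq _ _ (ker_mkQ_comp_rowSum k).symm).trans
    (LinearMap.quotKerEquivOfSurjective _ hsurj), fun P => rfl⟩
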